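/- There exists a constant C > 0 such that for every odd positive integer d and every t with 0 < t ≤ d^{−1/2}, the remainder r_d(t) := (πd/2)^{1/4}·e^{−t²/4}·H_d(t) − sin((1−d)π/2 + √d·t) satisfies |r_d(t)|/t ≤ C/√d. -/

import Mathlib

open MeasureTheory ProbabilityTheory Real

/-- The `d`-th normalized Hermite polynomial (as a function on `ℝ`): the monic
probabilist's Hermite polynomial divided by `√(d!)`. -/
noncomputable def normHermite (d : ℕ) (x : ℝ) : ℝ :=
  Polynomial.aeval x (Polynomial.hermite d) / Real.sqrt (Nat.factorial d)

/-- The remainder in the Plancherel–Rotach asymptotic expansion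
`H_d(x) = e^{x²/4} (2/(πd))^{1/4} (sin((1−d)π/2 + √d x) + r_d(x))`. -/
noncomputable def prRemainder (d : ℕ) (x : ℝ) : ℝ :=
  (π * d / 2) ^ ((1 : ℝ) / 4) * Real.exp (-x ^ 2 / 4) * normHermite d x
    - Real.sin ((1 - (d : ℝ)) * π / 2 + Real.sqrt d * x)

/-! For odd `d = 2m + 1`, `u(x) = (πd/2)^{1/4} e^{-x²/4} H_d(x)` solves
`u'' + d u = (x²/4 - 1/2) u` with `u(0) = 0`, so Duhamel's formula for the oscillator
`u'' + d u` gives `√d u(t) = u'(0) sin(√d t) + ∫₀ᵗ sin(√d (t - s)) (s²/4 - 1/2) u(s) ds`.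
By Wallis' product, `(-1)^m u'(0)` is within `1/√d` of `√d`, which accounts for the main
term `(-1)^m sin(√d t)`. The energy `u'² + (d + 1/2 - x²/4) u²` decreases on `[0, 1]`, so
`|u(s)| ≤ |u'(0)| s ≤ 2√d s` there, and the integral is at most `√d t²`.
Altogether `|r_d(t)| ≤ t/√d + t² ≤ 2t/√d` when `t ≤ 1/√d`. -/

open Set
open scoped Nat

theorem harmonic_oscillator_duhamel {f f' g : ℝ → ℝ} {ω : ℝ}
    (hf : ∀ x, HasDerivAt f (f' x) x) (hf' : ∀ x, HasDerivAt f' (g x - ω ^ 2 * f x) x)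
    (hg : Continuous g) (t : ℝ) :
    ω * f t = ω * cos (ω * t) * f 0 + sin (ω * t) * f' 0
      + ∫ s in (0 : ℝ)..t, sin (ω * (t - s)) * g s := by
  have hφ : ∀ s, HasDerivAt (fun s => sin (ω * (t - s)) * f' s + ω * cos (ω * (t - s)) * f s)
      (sin (ω * (t - s)) * g s) s := by
    intro s
    have hθ : HasDerivAt (fun s => ω * (t - s)) (-ω) s := by
      simpa using ((hasDerivAt_id s).const_sub t).const_mul ω
    exact ((hθ.sin.mul (hf' s)).add ((hθ.cos.const_mul ω).mul (hf s))).congr_deriv (by ring)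
  have hint : IntervalIntegrable (fun s => sin (ω * (t - s)) * g s) volume 0 t :=
    ((continuous_sin.comp (continuous_const.mul (continuous_const.sub continuous_id))).mul
      hg).intervalIntegrable _ _
  rw [intervalIntegral.integral_eq_sub_of_hasDerivAt (fun s _ => hφ s) hint]
  simp only [sub_self, mul_zero, sin_zero, cos_zero, sub_zero]
  ring

theorem abs_integral_sin_mul_le {g : ℝ → ℝ} {ω t M : ℝ} (ht : 0 ≤ t)
    (hg : ∀ s ∈ Icc 0 t, |g s| ≤ M) :
    |∫ s in (0 : ℝ)..t, sin (ω * (t - s)) * g s| ≤ M * t := by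
  have hM : ∀ s ∈ uIoc (0 : ℝ) t, ‖sin (ω * (t - s)) * g s‖ ≤ M := by
    intro s hs
    rw [uIoc_of_le ht] at hs
    rw [norm_mul, Real.norm_eq_abs, Real.norm_eq_abs]
    calc |sin (ω * (t - s))| * |g s| ≤ 1 * M :=
          mul_le_mul (abs_sin_le_one _) (hg s (Ioc_subset_Icc_self hs)) (abs_nonneg _) zero_le_one
      _ = M := one_mul M
  simpa [abs_of_nonneg ht] using intervalIntegral.norm_integral_le_of_norm_le_const hM

theorem abs_deriv_le_of_energy {f f' q q' : ℝ → ℝ} {a : ℝ}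
    (hf : ∀ x, HasDerivAt f (f' x) x) (hf' : ∀ x, HasDerivAt f' (-(q x * f x)) x)
    (hq : ∀ x, HasDerivAt q (q' x) x) (hq' : ∀ x ∈ Icc 0 a, q' x ≤ 0)
    (hq0 : ∀ x ∈ Icc 0 a, 0 ≤ q x) (hf0 : f 0 = 0) :
    ∀ x ∈ Icc 0 a, |f' x| ≤ |f' 0| := by
  set E := fun x => f' x ^ 2 + q x * f x ^ 2
  have hE : ∀ x, HasDerivAt E (q' x * f x ^ 2) x := fun x =>
    (((hf' x).pow 2).add ((hq x).mul ((hf x).pow 2))).congr_deriv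
      (by simp only [Pi.pow_apply]; push_cast; ring)
  have hanti : AntitoneOn E (Icc 0 a) := by
    refine antitoneOn_of_deriv_nonpos (convex_Icc 0 a)
      (fun x _ => (hE x).continuousAt.continuousWithinAt)
      (fun x _ => (hE x).differentiableAt.differentiableWithinAt) fun x hx => ?_
    rw [(hE x).deriv]
    exact mul_nonpos_of_nonpos_of_nonneg (hq' x (interior_subset hx)) (sq_nonneg _)
  intro x hx
  have h0 : (0 : ℝ) ∈ Icc 0 a := ⟨le_rfl, hx.1.trans hx.2⟩
  have hEx : E x ≤ E 0 := hanti h0 hx hx.1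
  have : f' x ^ 2 ≤ f' 0 ^ 2 := by
    simp only [E, hf0] at hEx
    nlinarith [mul_nonneg (hq0 x hx) (sq_nonneg (f x))]
  exact sq_le_sq.mp this

theorem abs_le_of_energy {f f' q q' : ℝ → ℝ} {a : ℝ}
    (hf : ∀ x, HasDerivAt f (f' x) x) (hf' : ∀ x, HasDerivAt f' (-(q x * f x)) x)
    (hq : ∀ x, HasDerivAt q (q' x) x) (hq' : ∀ x ∈ Icc 0 a, q' x ≤ 0)
    (hq0 : ∀ x ∈ Icc 0 a, 0 ≤ q x) (hf0 : f 0 = 0) :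
    ∀ x ∈ Icc 0 a, |f x| ≤ |f' 0| * x := by
  intro x hx
  have := norm_image_sub_le_of_norm_deriv_le_segment' (fun y _ => (hf y).hasDerivWithinAt)
    (fun y hy => abs_deriv_le_of_energy hf hf' hq hq' hq0 hf0 y (Ico_subset_Icc_self hy)) x hx
  simpa [hf0] using this

namespace Polynomial

theorem derivative_hermite_succ (n : ℕ) :
    derivative (hermite (n + 1)) = (n + 1 : ℤ[X]) * hermite n := by
  induction n with
  | zero => simp
  | succ n ih =>
    rw [hermite_succ (n + 1), derivative_sub, derivative_mul, derivative_X, ih, derivative_mul]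
    simp only [derivative_add, derivative_natCast, derivative_one, zero_mul, zero_add]
    rw [hermite_succ n]
    push_cast
    ring

theorem derivative_derivative_hermite (n : ℕ) :
    derivative (derivative (hermite n))
      = X * derivative (hermite n) - (n : ℤ[X]) * hermite n := by
  have h := congrArg derivative (hermite_succ n)
  rw [derivative_hermite_succ, derivative_sub, derivative_mul, derivative_X] at h
  linear_combination h

theorem coeff_hermite_two_mul_add_one_zero (m : ℕ) : (hermite (2 * m + 1)).coeff 0 = 0 :=
  coeff_hermite_of_odd_add (by simp)

theorem coeff_hermite_two_mul_add_one_one (m : ℕ) :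
    (hermite (2 * m + 1)).coeff 1 = (-1) ^ m * (2 * m + 1)‼ := by
  rw [coeff_hermite_explicit, Nat.choose_one_right, Nat.doubleFactorial_add_one]
  push_cast
  ring

end Polynomial

open Polynomial

theorem hasDerivAt_exp_neg_sq_div_four (x : ℝ) :
    HasDerivAt (fun x : ℝ => exp (-x ^ 2 / 4)) (exp (-x ^ 2 / 4) * (-x / 2)) x := by
  have h : HasDerivAt (fun x : ℝ => -x ^ 2 / 4) (-x / 2) x :=
    (((hasDerivAt_pow 2 x).neg).div_const 4).congr_deriv (by norm_num; ring)
  exact h.exp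

noncomputable def hermiteFunction (n : ℕ) (x : ℝ) : ℝ :=
  exp (-x ^ 2 / 4) * aeval x (hermite n)

theorem hasDerivAt_hermiteFunction (n : ℕ) (x : ℝ) :
    HasDerivAt (hermiteFunction n)
      (exp (-x ^ 2 / 4) * (aeval x (derivative (hermite n)) - x / 2 * aeval x (hermite n))) x :=
  ((hasDerivAt_exp_neg_sq_div_four x).mul ((hermite n).hasDerivAt_aeval x)).congr_deriv (by ring)

theorem deriv_hermiteFunction (n : ℕ) : deriv (hermiteFunction n) = fun x =>
    exp (-x ^ 2 / 4) * (aeval x (derivative (hermite n)) - x / 2 * aeval x (hermite n)) :=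
  funext fun x => (hasDerivAt_hermiteFunction n x).deriv

theorem hasDerivAt_deriv_hermiteFunction (n : ℕ) (x : ℝ) :
    HasDerivAt (deriv (hermiteFunction n))
      ((x ^ 2 / 4 - 1 / 2 - n) * hermiteFunction n x) x := by
  rw [deriv_hermiteFunction]
  refine ((hasDerivAt_exp_neg_sq_div_four x).mul (((derivative (hermite n)).hasDerivAt_aeval x).sub
    (((hasDerivAt_id x).div_const 2).mul ((hermite n).hasDerivAt_aeval x)))).congr_deriv ?_
  rw [hermiteFunction, derivative_derivative_hermite]
  simp only [map_sub, map_mul, aeval_X, map_natCast, id, Pi.sub_apply, Pi.mul_apply]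
  ring

theorem continuous_hermiteFunction (n : ℕ) : Continuous (hermiteFunction n) :=
  continuous_iff_continuousAt.mpr fun x => (hasDerivAt_hermiteFunction n x).continuousAt

theorem hermiteFunction_two_mul_add_one_zero (m : ℕ) : hermiteFunction (2 * m + 1) 0 = 0 := by
  rw [hermiteFunction, ← coeff_zero_eq_aeval_zero', coeff_hermite_two_mul_add_one_zero]
  simp

theorem deriv_hermiteFunction_two_mul_add_one_zero (m : ℕ) :
    deriv (hermiteFunction (2 * m + 1)) 0 = (-1) ^ m * (2 * m + 1)‼ := by
  rw [deriv_hermiteFunction]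
  beta_reduce
  rw [← coeff_zero_eq_aeval_zero', coeff_derivative, zero_add, coeff_hermite_two_mul_add_one_one]
  simp

theorem abs_hermiteFunction_two_mul_add_one_le (m : ℕ) {x : ℝ} (hx : x ∈ Icc 0 1) :
    |hermiteFunction (2 * m + 1) x| ≤ (2 * m + 1)‼ * x := by
  have hq : ∀ x : ℝ,
      HasDerivAt (fun x : ℝ => ((2 * m + 1 : ℕ) : ℝ) + 1 / 2 - x ^ 2 / 4) (-x / 2) x :=
    fun x => (((hasDerivAt_pow 2 x).div_const 4).const_sub _).congr_deriv (by norm_num; ring)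
  have h := abs_le_of_energy (q := fun x : ℝ => ((2 * m + 1 : ℕ) : ℝ) + 1 / 2 - x ^ 2 / 4)
    (fun x => (hasDerivAt_hermiteFunction _ x).differentiableAt.hasDerivAt)
    (fun x => (hasDerivAt_deriv_hermiteFunction (2 * m + 1) x).congr_deriv (by ring)) hq
    (fun x hx => by linarith [hx.1]) (fun x hx => by nlinarith [hx.1, hx.2])
    (hermiteFunction_two_mul_add_one_zero m) x hx
  simpa [deriv_hermiteFunction_two_mul_add_one_zero] using h

noncomputable def plancherelRotachConst (d : ℕ) : ℝ :=
  (π * d / 2) ^ ((1 : ℝ) / 4) / √(d ! : ℝ)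

noncomputable def prHermiteFunction (d : ℕ) (x : ℝ) : ℝ :=
  plancherelRotachConst d * hermiteFunction d x

theorem prRemainder_eq (d : ℕ) (x : ℝ) :
    prRemainder d x = prHermiteFunction d x - sin ((1 - (d : ℝ)) * π / 2 + √d * x) := by
  rw [prRemainder, normHermite, prHermiteFunction, plancherelRotachConst, hermiteFunction]
  ring

theorem Nat.factorial_two_mul_add_one (m : ℕ) :
    (2 * m + 1)! = (2 * m + 1)‼ * (2 ^ m * m !) := by
  rw [Nat.factorial_eq_mul_doubleFactorial, Nat.doubleFactorial_two_mul]

theorem plancherelRotachConst_mul_doubleFactorial_pow_four_mul_W (m : ℕ) :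
    (plancherelRotachConst (2 * m + 1) * (2 * m + 1)‼) ^ 4 * Wallis.W m
      = π / 2 * (2 * m + 1) ^ 2 := by
  have hroot :
      ((π * ((2 * m + 1 : ℕ) : ℝ) / 2) ^ ((1 : ℝ) / 4)) ^ 4 = π * (2 * m + 1) / 2 := by
    rw [← rpow_natCast, ← rpow_mul (by positivity)]
    norm_num
  have hsqrt : √((2 * m + 1)! : ℝ) ^ 4 = ((2 * m + 1)! : ℝ) ^ 2 := by
    rw [show 4 = 2 * 2 from rfl, pow_mul, sq_sqrt (by positivity)]
  have hfac : ((2 * m + 1)! : ℝ) = (2 * m + 1) * (2 * m)! := by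
    push_cast [Nat.factorial_succ]
    ring
  have hF : ((2 * m + 1)‼ : ℝ) * (2 ^ m * m !) = (2 * m + 1) * (2 * m)! := by
    rw [← hfac]; exact_mod_cast (Nat.factorial_two_mul_add_one m).symm
  rw [plancherelRotachConst, Wallis.W_eq_factorial_ratio, mul_pow, div_pow, hroot, hsqrt, hfac,
    pow_mul']
  field_simp
  rw [← mul_pow, ← mul_pow, mul_assoc, hF, mul_pow]

theorem abs_plancherelRotachConst_mul_doubleFactorial_sub_sqrt_le (m : ℕ) :
    |plancherelRotachConst (2 * m + 1) * (2 * m + 1)‼ - √((2 * m + 1 : ℕ) : ℝ)|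
      ≤ 1 / √((2 * m + 1 : ℕ) : ℝ) := by
  set Y := plancherelRotachConst (2 * m + 1) * (2 * m + 1)‼
  set D : ℝ := ((2 * m + 1 : ℕ) : ℝ)
  have hD : 1 ≤ D := by simp [D]
  have hY : 0 ≤ Y := by unfold Y plancherelRotachConst; positivity
  have hs : 0 < √D := sqrt_pos.mpr (by linarith)
  have hsD : √D ^ 2 = D := sq_sqrt (by linarith)
  have hYW : Y ^ 4 * Wallis.W m = π / 2 * D ^ 2 := by
    simpa [D] using plancherelRotachConst_mul_doubleFactorial_pow_four_mul_W m
  have hW_le := Wallis.W_le m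
  have hle_W : D / (D + 1) * (π / 2) ≤ Wallis.W m := by
    simpa [D, add_assoc, one_add_one_eq_two] using Wallis.le_W m
  have hlow : D ^ 2 ≤ Y ^ 4 := by nlinarith [pi_pos, pow_nonneg hY 4]
  have hupp : Y ^ 4 ≤ D * (D + 1) := by
    rw [div_mul_eq_mul_div, div_le_iff₀ (by linarith)] at hle_W
    have h : Y ^ 4 * (D * (π / 2)) ≤ D * (D + 1) * (D * (π / 2)) :=
      calc Y ^ 4 * (D * (π / 2)) ≤ Y ^ 4 * (Wallis.W m * (D + 1)) :=
            mul_le_mul_of_nonneg_left hle_W (pow_nonneg hY 4)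
        _ = D * (D + 1) * (D * (π / 2)) := by linear_combination (D + 1) * hYW
    exact le_of_mul_le_mul_right h (by positivity)
  have hsY : √D ≤ Y := le_of_pow_le_pow_left₀ four_ne_zero hY (by nlinarith)
  have hYs : Y ≤ √D + 1 / √D := by
    refine le_of_pow_le_pow_left₀ four_ne_zero (by positivity) (hupp.trans ?_)
    have : (√D + 1 / √D) ^ 2 = D + 2 + 1 / D := by
      field_simp
      rw [hsD]; ring
    nlinarith [one_div_pos.mpr (show 0 < D by linarith)]
  rw [abs_sub_le_iff]
  constructor <;> linarith [one_div_pos.mpr hs]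

theorem abs_prHermiteFunction_two_mul_add_one_le (m : ℕ) {x : ℝ} (hx : x ∈ Icc 0 1) :
    |prHermiteFunction (2 * m + 1) x| ≤ 2 * √((2 * m + 1 : ℕ) : ℝ) * x := by
  have hκ : 0 ≤ plancherelRotachConst (2 * m + 1) := by unfold plancherelRotachConst; positivity
  have hω : 1 ≤ √((2 * m + 1 : ℕ) : ℝ) := one_le_sqrt.mpr (by simp)
  have hslope :
      plancherelRotachConst (2 * m + 1) * (2 * m + 1)‼ ≤ 2 * √((2 * m + 1 : ℕ) : ℝ) := by
    have := (abs_sub_le_iff.mp (abs_plancherelRotachConst_mul_doubleFactorial_sub_sqrt_le m)).1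
    linarith [(div_le_one_of_le₀ hω (by linarith)).trans hω]
  calc |prHermiteFunction (2 * m + 1) x|
      = plancherelRotachConst (2 * m + 1) * |hermiteFunction (2 * m + 1) x| := by
        rw [prHermiteFunction, abs_mul, abs_of_nonneg hκ]
    _ ≤ plancherelRotachConst (2 * m + 1) * ((2 * m + 1)‼ * x) :=
        mul_le_mul_of_nonneg_left (abs_hermiteFunction_two_mul_add_one_le m hx) hκ
    _ ≤ 2 * √((2 * m + 1 : ℕ) : ℝ) * x := by
        rw [← mul_assoc]; exact mul_le_mul_of_nonneg_right hslope hx.1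

theorem sqrt_mul_prRemainder_two_mul_add_one (m : ℕ) (t : ℝ) :
    √((2 * m + 1 : ℕ) : ℝ) * prRemainder (2 * m + 1) t
      = (-1) ^ m * ((plancherelRotachConst (2 * m + 1) * (2 * m + 1)‼
            - √((2 * m + 1 : ℕ) : ℝ)) * sin (√((2 * m + 1 : ℕ) : ℝ) * t))
        + ∫ s in (0 : ℝ)..t, sin (√((2 * m + 1 : ℕ) : ℝ) * (t - s))
          * ((s ^ 2 / 4 - 1 / 2) * prHermiteFunction (2 * m + 1) s) := by
  set d := 2 * m + 1
  set κ := plancherelRotachConst d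
  have hω : √(d : ℝ) ^ 2 = d := sq_sqrt (Nat.cast_nonneg d)
  have h := harmonic_oscillator_duhamel (f := prHermiteFunction d)
    (f' := fun x => κ * deriv (hermiteFunction d) x)
    (g := fun s => (s ^ 2 / 4 - 1 / 2) * prHermiteFunction d s) (ω := √(d : ℝ))
    (fun x => (hasDerivAt_hermiteFunction d x).differentiableAt.hasDerivAt.const_mul κ)
    (fun x => ((hasDerivAt_deriv_hermiteFunction d x).const_mul κ).congr_deriv
      (by rw [prHermiteFunction, hω]; ring))
    (by have := continuous_hermiteFunction d; unfold prHermiteFunction; fun_prop) t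
  have hsin :
      sin ((1 - (d : ℝ)) * π / 2 + √(d : ℝ) * t) = (-1) ^ m * sin (√(d : ℝ) * t) := by
    rw [← sin_sub_nat_mul_pi]
    congr 1
    push_cast [d]
    ring
  have h0 : prHermiteFunction d 0 = 0 := by
    rw [prHermiteFunction, hermiteFunction_two_mul_add_one_zero, mul_zero]
  have h0' : deriv (hermiteFunction d) 0 = (-1) ^ m * d‼ :=
    deriv_hermiteFunction_two_mul_add_one_zero m
  simp only [h0, h0', mul_zero, zero_add] at h
  rw [prRemainder_eq, hsin]
  linear_combination h

theorem sqrt_mul_abs_prRemainder_two_mul_add_one_le (m : ℕ) {t : ℝ} (ht : t ∈ Icc 0 1) :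
    √((2 * m + 1 : ℕ) : ℝ) * |prRemainder (2 * m + 1) t|
      ≤ t + √((2 * m + 1 : ℕ) : ℝ) * t ^ 2 := by
  set ω := √((2 * m + 1 : ℕ) : ℝ)
  have hω0 : 0 < ω := sqrt_pos.mpr (by positivity)
  have hforce :
      ∀ s ∈ Icc 0 t, |(s ^ 2 / 4 - 1 / 2) * prHermiteFunction (2 * m + 1) s| ≤ ω * t := by
    intro s hs
    have hs1 : s ∈ Icc 0 1 := ⟨hs.1, hs.2.trans ht.2⟩
    have hp : |s ^ 2 / 4 - 1 / 2| ≤ 1 / 2 :=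
      abs_le.mpr ⟨by nlinarith [hs1.1], by nlinarith [hs1.1, hs1.2]⟩
    calc _ = |s ^ 2 / 4 - 1 / 2| * |prHermiteFunction (2 * m + 1) s| := abs_mul _ _
      _ ≤ 1 / 2 * (2 * ω * s) :=
        mul_le_mul hp (abs_prHermiteFunction_two_mul_add_one_le m hs1) (abs_nonneg _) (by norm_num)
      _ ≤ ω * t := by nlinarith [hs.2]
  have hY := abs_plancherelRotachConst_mul_doubleFactorial_sub_sqrt_le m
  have hsin : |sin (ω * t)| ≤ ω * t :=
    abs_sin_le_abs.trans (abs_of_nonneg (mul_nonneg hω0.le ht.1)).le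
  calc ω * |prRemainder (2 * m + 1) t| = |ω * prRemainder (2 * m + 1) t| := by
        rw [abs_mul, abs_of_pos hω0]
    _ ≤ |plancherelRotachConst (2 * m + 1) * (2 * m + 1)‼ - ω| * |sin (ω * t)|
          + ω * t * t := by
        rw [sqrt_mul_prRemainder_two_mul_add_one]
        refine (abs_add_le _ _).trans
          (add_le_add (le_of_eq ?_) (abs_integral_sin_mul_le ht.1 hforce))
        rw [abs_mul, abs_pow, abs_neg, abs_one, one_pow, one_mul, abs_mul]
    _ ≤ 1 / ω * (ω * t) + ω * t * t := by gcongr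
    _ = t + ω * t ^ 2 := by field_simp

theorem stmt_12 :
    ∃ C : ℝ, 0 < C ∧ ∀ d : ℕ, Odd d →
      ∀ t : ℝ, 0 < t → t ≤ (d : ℝ) ^ (-(1 : ℝ) / 2) →
        |prRemainder d t| / t ≤ C / Real.sqrt d := by
  refine ⟨2, two_pos, ?_⟩
  rintro d ⟨m, rfl⟩ t ht0 ht1
  have hω : 1 ≤ √((2 * m + 1 : ℕ) : ℝ) := one_le_sqrt.mpr (by simp)
  have htω : t * √((2 * m + 1 : ℕ) : ℝ) ≤ 1 := by
    rwa [neg_div, rpow_neg (Nat.cast_nonneg _), ← sqrt_eq_rpow, ← one_div,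
      le_div_iff₀ (by linarith)] at ht1
  have h := sqrt_mul_abs_prRemainder_two_mul_add_one_le m ⟨ht0.le, by nlinarith⟩
  rw [div_le_div_iff₀ ht0 (by linarith)]
  nlinarith
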